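/- In the square grid on ℤ², any locating-dominating code has upper density at least 1/4. -/

import Mathlib

open Filter

/-- The ℓ¹-ball of radius `r` around a vertex of the square grid `ℤ²`. -/
def gridBall (v : ℤ × ℤ) (r : ℕ) : Set (ℤ × ℤ) :=
  {p | |p.1 - v.1| + |p.2 - v.2| ≤ (r : ℤ)}

/-- The closed neighborhood of a vertex of the square grid. -/
def gridNbhd (v : ℤ × ℤ) : Set (ℤ × ℤ) :=
  {v, (v.1 + 1, v.2), (v.1 - 1, v.2), (v.1, v.2 + 1), (v.1, v.2 - 1)}

/-- The open neighborhood of a vertex of the square grid. -/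
def gridOpenNbhd (v : ℤ × ℤ) : Set (ℤ × ℤ) :=
  {(v.1 + 1, v.2), (v.1 - 1, v.2), (v.1, v.2 + 1), (v.1, v.2 - 1)}

/-- Upper density of a set of grid vertices with respect to ℓ¹-balls around 0. -/
noncomputable def upperDensity (X : Set (ℤ × ℤ)) : ℝ :=
  Filter.limsup
    (fun r : ℕ => ((X ∩ gridBall 0 r).ncard : ℝ) / ((gridBall 0 r).ncard)) Filter.atTop

/-!
Let `D` be the non-codewords in the ball `B r` and `K` the codewords in `B (r + 1)`. The sets
`N(v) ∩ X`, `v ∈ D`, are nonempty, pairwise distinct and contained in `K`, and every codeword lies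
in at most four of them. So their sizes sum to at most `4 |K|`, while at most `|K|` of them are
singletons, so the sum is at least `2 |D| - |K|`. Hence `2 |D| ≤ 5 |K|` and `2 |B r| ≤ 7 |K|`;
since `|B (r + 1)| / |B r| → 1`, the density of `X` in `B (r + 1)` is eventually at least `1/4`.
-/

namespace Finset

variable {V W : Type*} {D : Finset V} {K : Finset W} {I : V → Finset W}

theorem card_filter_card_eq_one_le (hsub : ∀ v ∈ D, I v ⊆ K) (hinj : Set.InjOn I D) :
    #{v ∈ D | #(I v) = 1} ≤ #K := by
  calc #{v ∈ D | #(I v) = 1}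
      ≤ #(K.powersetCard 1) := card_le_card_of_injOn I
        (fun v hv => mem_powersetCard.2 ⟨hsub v (mem_filter.1 hv).1, (mem_filter.1 hv).2⟩)
        (hinj.mono fun v hv => (mem_filter.1 hv).1)
    _ = #K := by rw [card_powersetCard, Nat.choose_one_right]

theorem two_mul_card_le_sum_card_add (hne : ∀ v ∈ D, (I v).Nonempty) :
    2 * #D ≤ ∑ v ∈ D, #(I v) + #{v ∈ D | #(I v) = 1} := by
  rw [card_filter, ← sum_add_distrib, mul_comm, ← smul_eq_mul, ← sum_const]
  refine sum_le_sum fun v hv => ?_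
  have := (hne v hv).card_pos
  split_ifs <;> omega

theorem sum_card_le_mul_card [DecidableEq W] {Δ : ℕ} (hsub : ∀ v ∈ D, I v ⊆ K)
    (hmult : ∀ c ∈ K, #{v ∈ D | c ∈ I v} ≤ Δ) :
    ∑ v ∈ D, #(I v) ≤ Δ * #K := by
  calc ∑ v ∈ D, #(I v) = ∑ v ∈ D, #(K.bipartiteAbove (fun v c => c ∈ I v) v) :=
        sum_congr rfl fun v hv => by
          rw [bipartiteAbove, filter_mem_eq_inter, inter_eq_right.2 (hsub v hv)]
    _ = ∑ c ∈ K, #(D.bipartiteBelow (fun v c => c ∈ I v) c) :=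
        sum_card_bipartiteAbove_eq_sum_card_bipartiteBelow _
    _ ≤ #K • Δ := sum_le_card_nsmul _ _ _ hmult
    _ = Δ * #K := by rw [smul_eq_mul, mul_comm]

theorem two_mul_card_le_of_injOn [DecidableEq W] {Δ : ℕ} (hsub : ∀ v ∈ D, I v ⊆ K)
    (hne : ∀ v ∈ D, (I v).Nonempty) (hinj : Set.InjOn I D)
    (hmult : ∀ c ∈ K, #{v ∈ D | c ∈ I v} ≤ Δ) :
    2 * #D ≤ (Δ + 1) * #K := by
  have := two_mul_card_le_sum_card_add hne
  have := sum_card_le_mul_card hsub hmult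
  have := card_filter_card_eq_one_le hsub hinj
  linarith

end Finset

open Finset

noncomputable def gridBallFinset (r : ℕ) : Finset (ℤ × ℤ) :=
  {p ∈ Icc (-(r : ℤ)) r ×ˢ Icc (-(r : ℤ)) r | |p.1| + |p.2| ≤ r}

theorem mem_gridBallFinset {r : ℕ} {p : ℤ × ℤ} : p ∈ gridBallFinset r ↔ |p.1| + |p.2| ≤ r := by
  simp only [gridBallFinset, mem_filter, mem_product, and_iff_right_iff_imp]
  intro h
  have h1 : |p.1| ≤ r := by linarith [abs_nonneg p.2]
  have h2 : |p.2| ≤ r := by linarith [abs_nonneg p.1]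
  exact ⟨mem_Icc.2 (abs_le.1 h1), mem_Icc.2 (abs_le.1 h2)⟩

theorem coe_gridBallFinset (r : ℕ) : (gridBallFinset r : Set (ℤ × ℤ)) = gridBall 0 r := by
  ext p
  simp [mem_gridBallFinset, gridBall]

theorem sum_abs_Icc_neg (r : ℕ) : ∑ x ∈ Icc (-(r : ℤ)) r, |x| = r * (r + 1) := by
  induction r with
  | zero => simp
  | succ n ih =>
    have hIcc : Icc (-((n + 1 : ℕ) : ℤ)) (n + 1 : ℕ)
        = insert ((n : ℤ) + 1) (insert (-((n : ℤ) + 1)) (Icc (-(n : ℤ)) n)) := by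
      ext x; simp only [mem_insert, mem_Icc]; push_cast; omega
    rw [hIcc, sum_insert (by simp only [mem_insert, mem_Icc]; omega),
      sum_insert (by simp only [mem_Icc]; omega), ih, abs_neg,
      abs_of_nonneg (by positivity : (0 : ℤ) ≤ n + 1)]
    push_cast; ring

theorem card_gridBallFinset (r : ℕ) : #(gridBallFinset r) = 2 * r ^ 2 + 2 * r + 1 := by
  have hfiber : ∀ x ∈ Icc (-(r : ℤ)) r,
      (#{p ∈ gridBallFinset r | p.1 = x} : ℤ) = 2 * (r - |x|) + 1 := by
    intro x hx
    have hx' : |x| ≤ r := abs_le.2 (mem_Icc.1 hx)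
    have : {p ∈ gridBallFinset r | p.1 = x} = {x} ×ˢ Icc (-(r - |x|)) (r - |x|) := by
      ext ⟨a, b⟩
      simp only [mem_filter, mem_gridBallFinset, mem_product, mem_singleton, mem_Icc, ← abs_le]
      constructor
      · rintro ⟨h, rfl⟩; exact ⟨rfl, by linarith⟩
      · rintro ⟨rfl, h⟩; exact ⟨by linarith, rfl⟩
    rw [this, card_product, card_singleton, one_mul, Int.card_Icc]
    omega
  have hmaps : ∀ p ∈ gridBallFinset r, p.1 ∈ Icc (-(r : ℤ)) r := fun p hp => by
    rw [mem_gridBallFinset] at hp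
    exact mem_Icc.2 (abs_le.1 (by linarith [abs_nonneg p.2]))
  zify
  rw [card_eq_sum_card_fiberwise hmaps, Nat.cast_sum, sum_congr rfl hfiber]
  simp only [sum_add_distrib, mul_sub, sum_sub_distrib, ← mul_sum, sum_abs_Icc_neg, sum_const,
    Int.card_Icc, nsmul_eq_mul]
  rw [show ((r : ℤ) + 1 - -r).toNat = 2 * r + 1 by omega]
  push_cast
  ring

def gridOpenNbhdFinset (v : ℤ × ℤ) : Finset (ℤ × ℤ) :=
  {(v.1 + 1, v.2), (v.1 - 1, v.2), (v.1, v.2 + 1), (v.1, v.2 - 1)}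

theorem coe_gridOpenNbhdFinset (v : ℤ × ℤ) :
    (gridOpenNbhdFinset v : Set (ℤ × ℤ)) = gridOpenNbhd v := by
  simp [gridOpenNbhdFinset, gridOpenNbhd]

theorem mem_gridOpenNbhdFinset_comm {u v : ℤ × ℤ} :
    u ∈ gridOpenNbhdFinset v ↔ v ∈ gridOpenNbhdFinset u := by
  simp only [gridOpenNbhdFinset, mem_insert, mem_singleton, Prod.ext_iff]
  omega

theorem card_gridOpenNbhdFinset_le (v : ℤ × ℤ) : #(gridOpenNbhdFinset v) ≤ 4 :=
  card_le_four

theorem gridOpenNbhdFinset_subset_gridBallFinset {r : ℕ} {v : ℤ × ℤ}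
    (hv : v ∈ gridBallFinset r) : gridOpenNbhdFinset v ⊆ gridBallFinset (r + 1) := by
  intro c hc
  rw [mem_gridBallFinset] at hv ⊢
  simp only [gridOpenNbhdFinset, mem_insert, mem_singleton] at hc
  have h1 := abs_add_le v.1 1
  have h2 := abs_sub v.1 1
  have h3 := abs_add_le v.2 1
  have h4 := abs_sub v.2 1
  rw [abs_one] at h1 h2 h3 h4
  push_cast
  rcases hc with rfl | rfl | rfl | rfl <;> dsimp only <;> linarith

theorem coe_filter_gridOpenNbhdFinset (X : Set (ℤ × ℤ)) [DecidablePred (· ∈ X)] (v : ℤ × ℤ) :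
    (↑({c ∈ gridOpenNbhdFinset v | c ∈ X} : Finset (ℤ × ℤ)) : Set (ℤ × ℤ)) =
      gridOpenNbhd v ∩ X := by
  rw [coe_filter, ← coe_gridOpenNbhdFinset]
  rfl

theorem gridBallFinset_mono {r s : ℕ} (h : r ≤ s) : gridBallFinset r ⊆ gridBallFinset s :=
  fun p hp => mem_gridBallFinset.2 ((mem_gridBallFinset.1 hp).trans (by exact_mod_cast h))

theorem ncard_inter_gridBall (X : Set (ℤ × ℤ)) [DecidablePred (· ∈ X)] (r : ℕ) :
    (X ∩ gridBall 0 r).ncard = #{c ∈ gridBallFinset r | c ∈ X} := by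
  rw [← Set.ncard_coe_finset, coe_filter, ← coe_gridBallFinset, Set.inter_comm]
  rfl

section LocatingDominating

variable (X : Set (ℤ × ℤ)) [DecidablePred (· ∈ X)]
  (hdom : ∀ v : ℤ × ℤ, v ∉ X → (gridOpenNbhd v ∩ X).Nonempty)
  (hloc : ∀ u v : ℤ × ℤ, u ∉ X → v ∉ X → u ≠ v → gridOpenNbhd u ∩ X ≠ gridOpenNbhd v ∩ X)
include hdom hloc

theorem two_mul_card_gridBallFinset_le (r : ℕ) :
    2 * #(gridBallFinset r) ≤ 7 * #{c ∈ gridBallFinset (r + 1) | c ∈ X} := by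
  set I : ℤ × ℤ → Finset (ℤ × ℤ) := fun v => {c ∈ gridOpenNbhdFinset v | c ∈ X}
  have hI : ∀ v, (I v : Set (ℤ × ℤ)) = gridOpenNbhd v ∩ X := coe_filter_gridOpenNbhdFinset X
  have hnoncodes : 2 * #{v ∈ gridBallFinset r | v ∉ X}
      ≤ (4 + 1) * #{c ∈ gridBallFinset (r + 1) | c ∈ X} := by
    refine two_mul_card_le_of_injOn (I := I) ?_ ?_ ?_ ?_
    · intro v hv
      exact filter_subset_filter _
        (gridOpenNbhdFinset_subset_gridBallFinset (mem_filter.1 hv).1)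
    · intro v hv
      rw [← coe_nonempty, hI]
      exact hdom v (mem_filter.1 hv).2
    · intro u hu v hv huv
      by_contra hne
      exact hloc u v (mem_filter.1 hu).2 (mem_filter.1 hv).2 hne (by rw [← hI, ← hI, huv])
    · intro c _
      refine (card_le_card fun v hv => ?_).trans (card_gridOpenNbhdFinset_le c)
      exact mem_gridOpenNbhdFinset_comm.1 (mem_filter.1 (mem_filter.1 hv).2).1
  have hcodes : #{c ∈ gridBallFinset r | c ∈ X} ≤ #{c ∈ gridBallFinset (r + 1) | c ∈ X} :=
    card_le_card (filter_subset_filter _ (gridBallFinset_mono r.le_succ))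
  have := card_filter_add_card_filter_not (s := gridBallFinset r) (p := (· ∈ X))
  omega

theorem quarter_le_card_filter_div_card {s : ℕ} (hs : 15 ≤ s) :
    (1 : ℝ) / 4 ≤ #{c ∈ gridBallFinset s | c ∈ X} / #(gridBallFinset s) := by
  obtain ⟨r, rfl⟩ : ∃ r, s = r + 1 := ⟨s - 1, by omega⟩
  have hcount := two_mul_card_gridBallFinset_le X hdom hloc r
  rw [card_gridBallFinset] at hcount
  have hquarter : #(gridBallFinset (r + 1)) ≤ 4 * #{c ∈ gridBallFinset (r + 1) | c ∈ X} := by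
    -- `7 · 4 |K| ≥ 8 |B r| ≥ 7 |B (r + 1)|` as soon as `r ≥ 14`
    rw [card_gridBallFinset]
    nlinarith
  rw [div_le_div_iff₀ (by norm_num) (by rw [card_gridBallFinset]; positivity), one_mul,
    mul_comm]
  exact_mod_cast hquarter

end LocatingDominating

/-- Any locating-dominating code of the square grid has upper density at least `1/4`. -/
theorem stmt_19 (X : Set (ℤ × ℤ))
    (h1 : ∀ v : ℤ × ℤ, v ∉ X → (gridOpenNbhd v ∩ X).Nonempty)
    (h2 : ∀ u v : ℤ × ℤ, u ∉ X → v ∉ X → u ≠ v →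
      gridOpenNbhd u ∩ X ≠ gridOpenNbhd v ∩ X) :
    (1 : ℝ) / 4 ≤ upperDensity X := by
  classical
  have hratio : ∀ s, ((X ∩ gridBall 0 s).ncard : ℝ) / (gridBall 0 s).ncard
      = #{c ∈ gridBallFinset s | c ∈ X} / #(gridBallFinset s) := fun s => by
    rw [ncard_inter_gridBall, ← coe_gridBallFinset, Set.ncard_coe_finset]
  rw [upperDensity, funext hratio]
  refine le_limsup_of_frequently_le ?_ (isBoundedUnder_of ⟨1, fun s => ?_⟩)
  · exact (eventually_ge_atTop 15).frequently.mono
      fun s hs => quarter_le_card_filter_div_card X h1 h2 hs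
  · exact div_le_one_of_le₀ (by exact_mod_cast card_filter_le _ _) (Nat.cast_nonneg _)
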